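/- (Key bound in the proof of Theorem 6) Let Ω be an LT output degree distribution with average degree Ω̄ = Σ_{j=1}^{d_max} j·Ω_j. Then for every λ ∈ [0,1), 1 − ρ_λ ≥ (1 − λ)^{Ω̄}. -/

import Mathlib

/-! Write `x = 1 - 2λ`, so that `1 - λ = (1 + x)/2`. Jensen's inequality for the convex map
`t ↦ (1 - λ)^t` bounds `(1 - λ)^Ω̄` by `Σ Ω_j ((1 + x)/2)^j`, and each term is at most
`Ω_j (1 + x^j)/2`: by convexity of `t ↦ t^j` when `x ≥ 0`, and because
`((1 + x)/2)^j ≤ (1 + x)/2` and `x ≤ x^j` when `-1 ≤ x < 0`. The resulting sum is exactly `1 - ρ_λ`. -/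

open Finset

/-- `ρ_λ = (1/2)·Σ_{j=1}^{dmax} Ω_j·(1 − (1 − 2λ)^j)`. -/
noncomputable def rho (dmax : ℕ) (Ω : ℕ → ℝ) (lam : ℝ) : ℝ :=
  (1 / 2) * ∑ j ∈ Finset.Icc 1 dmax, Ω j * (1 - (1 - 2 * lam) ^ j)

lemma rpow_sum_natCast_mul_le_sum_mul_pow {a : ℝ} (ha : 0 < a) (s : Finset ℕ) (w : ℕ → ℝ)
    (hw : ∀ j ∈ s, 0 ≤ w j) (hw₁ : ∑ j ∈ s, w j = 1) :
    a ^ (∑ j ∈ s, (j : ℝ) * w j) ≤ ∑ j ∈ s, w j * a ^ j := by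
  have jensen := (convexOn_rpow_left ha).map_sum_le (p := fun j : ℕ => (j : ℝ)) hw hw₁
    (fun _ _ => Set.mem_univ _)
  simp only [smul_eq_mul, Real.rpow_natCast] at jensen
  simpa only [mul_comm (w _)] using jensen

lemma one_add_div_two_pow_le {x : ℝ} (hx : -1 ≤ x) {j : ℕ} (hj : j ≠ 0) :
    ((1 + x) / 2) ^ j ≤ (1 + x ^ j) / 2 := by
  rcases le_or_gt 0 x with hx₀ | hx₀
  · have := (convexOn_pow j).2 (Set.mem_Ici.2 hx₀) (Set.mem_Ici.2 zero_le_one)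
      (by norm_num : (0 : ℝ) ≤ 1 / 2) (by norm_num : (0 : ℝ) ≤ 1 / 2) (by norm_num)
    simp only [smul_eq_mul, one_pow] at this
    rw [show (1 + x) / 2 = 1 / 2 * x + 1 / 2 * 1 by ring]
    linarith
  · have hmid : ((1 + x) / 2) ^ j ≤ (1 + x) / 2 :=
      pow_le_of_le_one (by linarith) (by linarith) hj
    have habs : |x| ^ j ≤ |x| :=
      pow_le_of_le_one (abs_nonneg x) (abs_le.2 ⟨hx, hx₀.le.trans zero_le_one⟩) hj
    have hxj : x ≤ x ^ j := by
      have := neg_abs_le (x ^ j)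
      rw [abs_pow, abs_of_neg hx₀] at *
      linarith
    linarith

lemma one_sub_rho_eq (dmax : ℕ) (Ω : ℕ → ℝ) (hΩsum : ∑ j ∈ Icc 1 dmax, Ω j = 1)
    (lam : ℝ) :
    1 - rho dmax Ω lam = ∑ j ∈ Icc 1 dmax, Ω j * ((1 + (1 - 2 * lam) ^ j) / 2) := by
  calc 1 - rho dmax Ω lam
      = ∑ j ∈ Icc 1 dmax, Ω j
          - (1 / 2) * ∑ j ∈ Icc 1 dmax, Ω j * (1 - (1 - 2 * lam) ^ j) := by
        rw [rho, hΩsum]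
    _ = ∑ j ∈ Icc 1 dmax, Ω j * ((1 + (1 - 2 * lam) ^ j) / 2) := by
        rw [mul_sum, ← sum_sub_distrib]
        exact sum_congr rfl fun _ _ => by ring

/-- Key bound in the proof of Theorem 6: for every `λ ∈ [0,1)`,
`1 − ρ_λ ≥ (1 − λ)^{Ω̄}`, where `Ω̄ = Σ_{j=1}^{dmax} j·Ω_j` is the average degree
(real exponent). -/
theorem stmt_13 (dmax : ℕ) (Ω : ℕ → ℝ)
    (hΩpos : ∀ j ∈ Finset.Icc 1 dmax, 0 ≤ Ω j)
    (hΩsum : ∑ j ∈ Finset.Icc 1 dmax, Ω j = 1)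
    (lam : ℝ) (hlam : lam ∈ Set.Ico (0 : ℝ) 1) :
    (1 - lam) ^ (∑ j ∈ Finset.Icc 1 dmax, (j : ℝ) * Ω j) ≤ 1 - rho dmax Ω lam := by
  calc (1 - lam) ^ (∑ j ∈ Icc 1 dmax, (j : ℝ) * Ω j)
      ≤ ∑ j ∈ Icc 1 dmax, Ω j * (1 - lam) ^ j :=
        rpow_sum_natCast_mul_le_sum_mul_pow (by linarith [hlam.2]) _ Ω hΩpos hΩsum
    _ ≤ ∑ j ∈ Icc 1 dmax, Ω j * ((1 + (1 - 2 * lam) ^ j) / 2) := by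
        refine sum_le_sum fun j hj => mul_le_mul_of_nonneg_left ?_ (hΩpos j hj)
        have := one_add_div_two_pow_le (x := 1 - 2 * lam) (by linarith [hlam.2])
          (Nat.one_le_iff_ne_zero.1 (mem_Icc.1 hj).1)
        rwa [show (1 + (1 - 2 * lam)) / 2 = 1 - lam by ring] at this
    _ = 1 - rho dmax Ω lam := (one_sub_rho_eq dmax Ω hΩsum lam).symm
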